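/- For every real r > 3/2 there exists a constant C_r > 0 such that for every τ ≥ 0 and all a, b, c : ℤ² → [0,∞]: ∑_{(j,k)∈ℤ²×ℤ²} ‖j‖ · a(j) · b(k) · ‖j+k‖^{r} e^{τ‖j+k‖} · c(j+k) ≤ C_r · S_{r+1/2,τ}(a) · (b(0) + S_{r,τ}(b)) · (S_{r,τ}(c) + S_{r+1/2,τ}(c)). (This is the Fourier-coefficient form of the vertical-advection estimate |⟨A^r e^{τA}((∫₀^z ∇·f ds) ∂_z g), A^r e^{τA}h⟩| of Lemma A.2.) -/

import Mathlib

/-!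
Absorbing `e^{τ‖m‖}` into `c` reduces the estimate to `τ = 0`, because the exponential weight is
at least `1` on `a` and `b`. The terms with `k = 0` give `b(0)` times the Cauchy–Schwarz pairing of
`‖j‖^{r+1/2} a` with `‖j‖^{1/2} c`. For `k ≠ 0` split `‖j+k‖^r ≤ 2^{r-1} (‖j‖^r + ‖k‖^r)`. In the
`‖j‖^{r+1}` part the surplus half power moves onto the other two factors,
`‖j‖^{1/2} ≤ 2 ‖k‖^{1/2} ‖j+k‖^{1/2}` (nonzero lattice points have norm at least `1`), leaving an
`ℓ¹ × ℓ² × ℓ²` convolution with `‖k‖^{1/2} b` as the `ℓ¹` factor; in the `‖j‖ ‖k‖^r` part the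
`ℓ¹` factor is `‖j‖ a`. Both `ℓ¹` norms are bounded by Cauchy–Schwarz against the lattice sum
`∑_{k ≠ 0} ‖k‖^{1-2r}`, which is finite since `2r - 1 > 2`.
-/

open scoped ENNReal

noncomputable section

/-- Euclidean norm of a lattice point `k ∈ ℤ²` viewed as a vector in `ℝ²`. -/
def nz (k : ℤ × ℤ) : ℝ := Real.sqrt ((k.1 : ℝ) ^ 2 + (k.2 : ℝ) ^ 2)

/-- The weighted ℓ²-norm `S_{ρ,τ}(a) = (∑_k ‖k‖^{2ρ} e^{2τ‖k‖} a(k)²)^{1/2}`. -/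
def S (ρ τ : ℝ) (a : ℤ × ℤ → ℝ≥0∞) : ℝ≥0∞ :=
  (∑' k : ℤ × ℤ, ENNReal.ofReal (nz k ^ (2 * ρ) * Real.exp (2 * τ * nz k)) * (a k) ^ 2)
    ^ ((1 : ℝ) / 2)

def ell2 {ι : Type*} (f : ι → ℝ≥0∞) : ℝ≥0∞ := (∑' i, f i ^ 2) ^ ((1 : ℝ) / 2)

section ell2

variable {ι : Type*}

theorem ell2_mono {f g : ι → ℝ≥0∞} (h : ∀ i, f i ≤ g i) : ell2 f ≤ ell2 g := by
  unfold ell2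
  gcongr with i
  exact h i

theorem ell2_comp_equiv {κ : Type*} (e : ι ≃ κ) (f : κ → ℝ≥0∞) : ell2 (f ∘ e) = ell2 f := by
  simp only [ell2, Function.comp_apply, e.tsum_eq (fun k => f k ^ 2)]

theorem tsum_mul_le_ell2_mul_ell2 (f g : ι → ℝ≥0∞) : ∑' i, f i * g i ≤ ell2 f * ell2 g := by
  rw [ENNReal.tsum_eq_iSup_sum]
  refine iSup_le fun s => ?_
  calc ∑ i ∈ s, f i * g i
      ≤ (∑ i ∈ s, f i ^ (2 : ℝ)) ^ (1 / (2 : ℝ)) * (∑ i ∈ s, g i ^ (2 : ℝ)) ^ (1 / (2 : ℝ)) :=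
        ENNReal.inner_le_Lp_mul_Lq s f g .two_two
    _ ≤ ell2 f * ell2 g := by
        simp only [ell2, ENNReal.rpow_two]
        gcongr <;> exact ENNReal.sum_le_tsum s

theorem tsum_tsum_mul_mul_add_le {G : Type*} [AddGroup G] (f g h : G → ℝ≥0∞) :
    ∑' j, ∑' k, f j * (g k * h (j + k)) ≤ (∑' j, f j) * (ell2 g * ell2 h) := by
  calc ∑' j, ∑' k, f j * (g k * h (j + k))
      ≤ ∑' j, f j * (ell2 g * ell2 (h ∘ Equiv.addLeft j)) := by
        gcongr with j
        rw [ENNReal.tsum_mul_left]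
        gcongr
        exact tsum_mul_le_ell2_mul_ell2 g _
    _ = (∑' j, f j) * (ell2 g * ell2 h) := by
        simp only [ell2_comp_equiv, ENNReal.tsum_mul_right]

end ell2

theorem nz_nonneg (k : ℤ × ℤ) : 0 ≤ nz k := Real.sqrt_nonneg _

theorem nz_eq_norm (k : ℤ × ℤ) : nz k = ‖(⟨k.1, k.2⟩ : ℂ)‖ := by
  simp only [nz, Complex.norm_def, Complex.normSq_mk, sq]

theorem nz_add_le (j k : ℤ × ℤ) : nz (j + k) ≤ nz j + nz k := by
  have hadd : (⟨(j + k).1, (j + k).2⟩ : ℂ) = ⟨j.1, j.2⟩ + ⟨k.1, k.2⟩ := by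
    apply Complex.ext <;> simp
  simpa only [nz_eq_norm, hadd] using norm_add_le _ _

theorem nz_neg (k : ℤ × ℤ) : nz (-k) = nz k := by
  simp [nz]

theorem one_le_nz {k : ℤ × ℤ} (hk : k ≠ 0) : 1 ≤ nz k := by
  have hsq : (1 : ℤ) ≤ k.1 ^ 2 + k.2 ^ 2 := by
    rcases eq_or_ne k.1 0 with h1 | h1
    · have h2 : k.2 ≠ 0 := fun h2 => hk (Prod.ext h1 h2)
      nlinarith [sq_nonneg k.1, pow_pos (abs_pos.2 h2) 2, sq_abs k.2]
    · nlinarith [sq_nonneg k.2, pow_pos (abs_pos.2 h1) 2, sq_abs k.1]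
  exact Real.one_le_sqrt.2 (by exact_mod_cast hsq)

theorem norm_finTwoArrowEquiv_symm_le_nz (k : ℤ × ℤ) : ‖(finTwoArrowEquiv ℤ).symm k‖ ≤ nz k := by
  refine (pi_norm_le_iff_of_nonneg (nz_nonneg k)).2 fun i => ?_
  fin_cases i <;> simp only [finTwoArrowEquiv_symm_apply, Int.norm_eq_abs] <;>
    exact Real.abs_le_sqrt (by simp [sq_nonneg])

def enz (k : ℤ × ℤ) : ℝ≥0∞ := ENNReal.ofReal (nz k)

theorem enz_zero : enz 0 = 0 := by
  simp [enz, nz]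

theorem one_le_enz {k : ℤ × ℤ} (hk : k ≠ 0) : 1 ≤ enz k :=
  ENNReal.one_le_ofReal.2 (one_le_nz hk)

theorem enz_ne_zero {k : ℤ × ℤ} (hk : k ≠ 0) : enz k ≠ 0 :=
  (zero_lt_one.trans_le (one_le_enz hk)).ne'

theorem enz_ne_top {k : ℤ × ℤ} : enz k ≠ ⊤ := ENNReal.ofReal_ne_top

theorem enz_add_le (j k : ℤ × ℤ) : enz (j + k) ≤ enz j + enz k :=
  (ENNReal.ofReal_le_ofReal (nz_add_le j k)).trans ENNReal.ofReal_add_le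

theorem enz_le_add_enz_add (j k : ℤ × ℤ) : enz j ≤ enz k + enz (j + k) := by
  simpa [enz, nz_neg, add_comm] using enz_add_le (j + k) (-k)

theorem enz_rpow_le_rpow {e f : ℝ} (he : 0 < e) (hef : e ≤ f) (k : ℤ × ℤ) :
    enz k ^ e ≤ enz k ^ f := by
  rcases eq_or_ne k 0 with rfl | hk
  · simp [enz_zero, ENNReal.zero_rpow_of_pos he, ENNReal.zero_rpow_of_pos (he.trans_le hef)]
  · exact ENNReal.rpow_le_rpow_of_exponent_le (one_le_enz hk) hef

theorem enz_rpow_half_le {j k : ℤ × ℤ} (hk : k ≠ 0) (hjk : j + k ≠ 0) :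
    enz j ^ ((1 : ℝ) / 2) ≤ 2 * (enz k ^ ((1 : ℝ) / 2) * enz (j + k) ^ ((1 : ℝ) / 2)) := by
  have h : enz j ≤ 2 * (enz k * enz (j + k)) := by
    rw [two_mul]
    refine (enz_le_add_enz_add j k).trans (add_le_add ?_ ?_)
    · exact le_mul_of_one_le_right' (one_le_enz hjk)
    · exact le_mul_of_one_le_left' (one_le_enz hk)
  calc enz j ^ ((1 : ℝ) / 2) ≤ (2 * (enz k * enz (j + k))) ^ ((1 : ℝ) / 2) := by gcongr
    _ = 2 ^ ((1 : ℝ) / 2) * (enz k ^ ((1 : ℝ) / 2) * enz (j + k) ^ ((1 : ℝ) / 2)) := by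
        rw [ENNReal.mul_rpow_of_nonneg _ _ (by norm_num),
          ENNReal.mul_rpow_of_nonneg _ _ (by norm_num)]
    _ ≤ 2 * (enz k ^ ((1 : ℝ) / 2) * enz (j + k) ^ ((1 : ℝ) / 2)) := by
        gcongr
        exact (ENNReal.rpow_le_rpow_of_exponent_le one_le_two (by norm_num)).trans_eq
          (ENNReal.rpow_one 2)

-- The `if` excludes `k = 0`, where `enz 0 ^ (-p) = ⊤`.
def latticeZeta (p : ℝ) : ℝ≥0∞ := ∑' k : ℤ × ℤ, if k = 0 then 0 else enz k ^ (-p)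

theorem latticeZeta_ne_top {p : ℝ} (hp : 2 < p) : latticeZeta p ≠ ⊤ := by
  set e := (finTwoArrowEquiv ℤ).symm
  have hsum : Summable fun k => ‖e k‖ ^ (-p) :=
    e.summable_iff.2 (EisensteinSeries.summable_one_div_norm_rpow hp)
  have hle : latticeZeta p ≤ ∑' k, ENNReal.ofReal (‖e k‖ ^ (-p)) := by
    refine ENNReal.tsum_le_tsum fun k => ?_
    split_ifs with hk
    · exact bot_le
    have he : 0 < ‖e k‖ := norm_pos_iff.2 fun h => hk <| by
      simpa [e, funext_iff, Fin.forall_fin_two, Prod.ext_iff] using h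
    rw [enz, ENNReal.ofReal_rpow_of_pos (zero_lt_one.trans_le (one_le_nz hk))]
    exact ENNReal.ofReal_le_ofReal
      (Real.rpow_le_rpow_of_nonpos he (norm_finTwoArrowEquiv_symm_le_nz k) (by linarith))
  rw [← ENNReal.ofReal_tsum_of_nonneg (fun _ => by positivity) hsum] at hle
  exact ne_top_of_le_ne_top ENNReal.ofReal_ne_top hle

def weighted (ρ : ℝ) (a : ℤ × ℤ → ℝ≥0∞) (k : ℤ × ℤ) : ℝ≥0∞ := enz k ^ ρ * a k

theorem tsum_weighted_le {s : ℝ} (hs : 0 < s) (ρ : ℝ) (a : ℤ × ℤ → ℝ≥0∞) :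
    ∑' k, weighted s a k ≤ latticeZeta (2 * (ρ - s)) ^ ((1 : ℝ) / 2) * ell2 (weighted ρ a) := by
  have hsplit : ∀ k, weighted s a k
      = (if k = 0 then 0 else enz k ^ (s - ρ)) * weighted ρ a k := by
    intro k
    split_ifs with hk
    · simp [weighted, hk, enz_zero, ENNReal.zero_rpow_of_pos hs]
    · rw [weighted, weighted, ← mul_assoc, ← ENNReal.rpow_add _ _ (enz_ne_zero hk) enz_ne_top,
        sub_add_cancel]
  refine (tsum_congr hsplit).trans_le ((tsum_mul_le_ell2_mul_ell2 _ _).trans_eq ?_)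
  congr 1
  simp only [ell2, latticeZeta]
  congr 2 with k
  split_ifs
  · simp
  · rw [← ENNReal.rpow_two, ← ENNReal.rpow_mul]
    ring_nf

section Pointwise

variable {r : ℝ} (a b c : ℤ × ℤ → ℝ≥0∞) (j k : ℤ × ℤ)

theorem weighted_mul_zero_eq (hr : 0 ≤ r) :
    weighted 1 a j * b 0 * weighted r c (j + 0)
      = b 0 * (weighted (r + 1 / 2) a j * weighted (1 / 2) c j) := by
  have hexp : enz j ^ (1 : ℝ) * enz j ^ r = enz j ^ (r + 1 / 2) * enz j ^ ((1 : ℝ) / 2) := by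
    rw [← ENNReal.rpow_add_of_nonneg _ _ zero_le_one hr,
      ← ENNReal.rpow_add_of_nonneg _ _ (by linarith) (by norm_num)]
    ring_nf
  calc weighted 1 a j * b 0 * weighted r c (j + 0)
      = enz j ^ (1 : ℝ) * enz j ^ r * (a j * b 0 * c j) := by
        simp only [weighted, add_zero]
        ring
    _ = b 0 * (weighted (r + 1 / 2) a j * weighted (1 / 2) c j) := by
        rw [hexp, weighted, weighted]
        ring

theorem weighted_mul_le_of_ne_zero (hr : 1 ≤ r) (hk : k ≠ 0) :
    weighted 1 a j * b k * weighted r c (j + k)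
      ≤ 2 ^ (r - 1) * (2 * (weighted (1 / 2) b k * (weighted (r + 1 / 2) a j
          * weighted (1 / 2) c (j + k))) + weighted 1 a j * (weighted r b k
          * weighted (1 / 2) c (j + k))) := by
  rcases eq_or_ne (j + k) 0 with hjk | hjk
  · simp [weighted, hjk, enz_zero, ENNReal.zero_rpow_of_pos (by linarith : 0 < r)]
  have hsum : enz (j + k) ^ r ≤ 2 ^ (r - 1) * (enz j ^ r + enz k ^ r) :=
    (ENNReal.rpow_le_rpow (enz_add_le j k) (by linarith)).trans
      (ENNReal.rpow_add_le_mul_rpow_add_rpow _ _ hr)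
  have hj : enz j ^ (1 : ℝ) * enz j ^ r
      ≤ 2 * (enz k ^ ((1 : ℝ) / 2) * (enz j ^ (r + 1 / 2) * enz (j + k) ^ ((1 : ℝ) / 2))) := by
    rw [← ENNReal.rpow_add_of_nonneg _ _ zero_le_one (by linarith),
      show 1 + r = (r + 1 / 2) + 1 / 2 by ring,
      ENNReal.rpow_add_of_nonneg _ _ (by linarith) (by norm_num)]
    calc enz j ^ (r + 1 / 2) * enz j ^ ((1 : ℝ) / 2)
        ≤ enz j ^ (r + 1 / 2) * (2 * (enz k ^ ((1 : ℝ) / 2) * enz (j + k) ^ ((1 : ℝ) / 2))) := by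
          gcongr
          exact enz_rpow_half_le hk hjk
      _ = _ := by ring
  have hc : c (j + k) ≤ weighted (1 / 2) c (j + k) :=
    le_mul_of_one_le_left' (ENNReal.one_le_rpow (one_le_enz hjk) (by norm_num))
  calc weighted 1 a j * b k * weighted r c (j + k)
      ≤ weighted 1 a j * b k * (2 ^ (r - 1) * (enz j ^ r + enz k ^ r) * c (j + k)) := by
        rw [show weighted r c (j + k) = enz (j + k) ^ r * c (j + k) from rfl]
        exact mul_le_mul' le_rfl (mul_le_mul' hsum le_rfl)
    _ = 2 ^ (r - 1) * (enz j ^ (1 : ℝ) * enz j ^ r * (b k * a j * c (j + k))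
          + weighted 1 a j * (weighted r b k * c (j + k))) := by
        simp only [weighted]
        ring
    _ ≤ _ := by
        refine mul_le_mul' le_rfl (add_le_add ?_ (mul_le_mul' le_rfl (mul_le_mul' le_rfl hc)))
        calc enz j ^ (1 : ℝ) * enz j ^ r * (b k * a j * c (j + k))
            ≤ 2 * (enz k ^ ((1 : ℝ) / 2) * (enz j ^ (r + 1 / 2) * enz (j + k) ^ ((1 : ℝ) / 2)))
                * (b k * a j * c (j + k)) := mul_le_mul' hj le_rfl
          _ = _ := by
              simp only [weighted]
              ring

theorem weighted_mul_le (hr : 1 ≤ r) :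
    weighted 1 a j * b k * weighted r c (j + k)
      ≤ (if k = 0 then b 0 * (weighted (r + 1 / 2) a j * weighted (1 / 2) c j) else 0)
        + 2 ^ (r - 1) * (2 * (weighted (1 / 2) b k * (weighted (r + 1 / 2) a j
          * weighted (1 / 2) c (j + k))) + weighted 1 a j * (weighted r b k
          * weighted (1 / 2) c (j + k))) := by
  split_ifs with hk
  · subst hk
    exact (weighted_mul_zero_eq a b c j (by linarith)).le.trans le_self_add
  · exact (weighted_mul_le_of_ne_zero a b c j k hr hk).trans_eq (zero_add _).symm

end Pointwise

theorem add_mul_le_one_add_mul_add (x y K : ℝ≥0∞) : x + K * y ≤ (1 + K) * (x + y) :=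
  calc x + K * y ≤ x + K * y + (y + K * x) := le_self_add
    _ = (1 + K) * (x + y) := by ring

def advectionConst (r : ℝ) : ℝ≥0∞ :=
  1 + 3 * 2 ^ (r - 1) * latticeZeta (2 * r - 1) ^ ((1 : ℝ) / 2)

theorem advectionConst_ne_top {r : ℝ} (hr : 3 / 2 < r) : advectionConst r ≠ ⊤ := by
  have := latticeZeta_ne_top (show 2 < 2 * r - 1 by linarith)
  unfold advectionConst
  finiteness

theorem tsum_tsum_weighted_mul_le {r : ℝ} (hr : 3 / 2 < r) (a b c : ℤ × ℤ → ℝ≥0∞) :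
    ∑' j, ∑' k, weighted 1 a j * b k * weighted r c (j + k)
      ≤ advectionConst r * ell2 (weighted (r + 1 / 2) a) * (b 0 + ell2 (weighted r b))
        * ell2 (weighted r c) := by
  set A := weighted (r + 1 / 2) a
  set C := weighted (1 / 2) c
  set Z := latticeZeta (2 * r - 1) ^ ((1 : ℝ) / 2)
  have hC : ell2 C ≤ ell2 (weighted r c) :=
    ell2_mono fun m => mul_le_mul' (enz_rpow_le_rpow (by norm_num) (by linarith) m) le_rfl
  have hb : ∑' k, weighted (1 / 2) b k ≤ Z * ell2 (weighted r b) := by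
    simpa only [Z, show 2 * (r - 1 / 2) = 2 * r - 1 by ring] using
      tsum_weighted_le (s := 1 / 2) (by norm_num) r b
  have ha : ∑' j, weighted 1 a j ≤ Z * ell2 A := by
    simpa only [Z, show 2 * (r + 1 / 2 - 1) = 2 * r - 1 by ring] using
      tsum_weighted_le one_pos (r + 1 / 2) a
  have hdiag : ∑' j, b 0 * (A j * C j) ≤ b 0 * (ell2 A * ell2 (weighted r c)) := by
    rw [ENNReal.tsum_mul_left]
    gcongr
    exact (tsum_mul_le_ell2_mul_ell2 A C).trans (mul_le_mul' le_rfl hC)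
  have hhigh : ∑' j, ∑' k, weighted (1 / 2) b k * (A j * C (j + k))
      ≤ Z * ell2 (weighted r b) * (ell2 A * ell2 (weighted r c)) := by
    rw [ENNReal.tsum_comm]
    simp only [add_comm _ (_ : ℤ × ℤ)]
    exact (tsum_tsum_mul_mul_add_le _ A C).trans (mul_le_mul' hb (mul_le_mul' le_rfl hC))
  have hlow : ∑' j, ∑' k, weighted 1 a j * (weighted r b k * C (j + k))
      ≤ Z * ell2 A * (ell2 (weighted r b) * ell2 (weighted r c)) :=
    (tsum_tsum_mul_mul_add_le _ _ C).trans (mul_le_mul' ha (mul_le_mul' le_rfl hC))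
  calc ∑' j, ∑' k, weighted 1 a j * b k * weighted r c (j + k)
      ≤ ∑' j, ∑' k, ((if k = 0 then b 0 * (A j * C j) else 0)
          + 2 ^ (r - 1) * (2 * (weighted (1 / 2) b k * (A j * C (j + k)))
            + weighted 1 a j * (weighted r b k * C (j + k)))) :=
        ENNReal.tsum_le_tsum fun j => ENNReal.tsum_le_tsum fun k =>
          weighted_mul_le a b c j k (by linarith)
    _ = ∑' j, b 0 * (A j * C j) + 2 ^ (r - 1) * (2 * ∑' j, ∑' k, weighted (1 / 2) b k
          * (A j * C (j + k)) + ∑' j, ∑' k, weighted 1 a j * (weighted r b k * C (j + k))) := by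
        simp only [ENNReal.tsum_add, ENNReal.tsum_mul_left, tsum_ite_eq]
    _ ≤ b 0 * (ell2 A * ell2 (weighted r c)) + 2 ^ (r - 1) * (2 * (Z * ell2 (weighted r b)
          * (ell2 A * ell2 (weighted r c))) + Z * ell2 A * (ell2 (weighted r b)
          * ell2 (weighted r c))) := by
        gcongr
    _ = ell2 A * ell2 (weighted r c) * (b 0 + 3 * 2 ^ (r - 1) * Z * ell2 (weighted r b)) := by
        ring
    _ ≤ ell2 A * ell2 (weighted r c) * (advectionConst r * (b 0 + ell2 (weighted r b))) := by
        gcongr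
        exact add_mul_le_one_add_mul_add _ _ _
    _ = _ := by ring

def expWeighted (τ : ℝ) (c : ℤ × ℤ → ℝ≥0∞) (k : ℤ × ℤ) : ℝ≥0∞ :=
  ENNReal.ofReal (Real.exp (τ * nz k)) * c k

theorem ell2_weighted_expWeighted {ρ : ℝ} (hρ : 0 ≤ ρ) (τ : ℝ) (c : ℤ × ℤ → ℝ≥0∞) :
    ell2 (weighted ρ (expWeighted τ c)) = S ρ τ c := by
  refine congrArg (· ^ ((1 : ℝ) / 2)) (tsum_congr fun k => ?_)
  have hnz := nz_nonneg k
  rw [weighted, expWeighted, enz, ENNReal.ofReal_rpow_of_nonneg hnz hρ, ← mul_assoc,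
    ← ENNReal.ofReal_mul (by positivity), mul_pow, ← ENNReal.ofReal_pow (by positivity), mul_pow,
    ← Real.rpow_mul_natCast hnz, ← Real.exp_nat_mul]
  ring_nf

theorem ell2_weighted_le_S {ρ τ : ℝ} (hρ : 0 ≤ ρ) (hτ : 0 ≤ τ) (a : ℤ × ℤ → ℝ≥0∞) :
    ell2 (weighted ρ a) ≤ S ρ τ a := by
  rw [← ell2_weighted_expWeighted hρ τ a]
  refine ell2_mono fun k => mul_le_mul' le_rfl (le_mul_of_one_le_left' ?_)
  exact ENNReal.one_le_ofReal.2 (Real.one_le_exp (mul_nonneg hτ (nz_nonneg k)))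

/-- Fourier-coefficient form of the vertical-advection estimate
`|⟨A^r e^{τA}((∫₀^z ∇·f ds) ∂_z g), A^r e^{τA}h⟩|` of Lemma A.2. -/
theorem vertical_advection_estimate :
    ∀ r : ℝ, 3 / 2 < r → ∃ C : ℝ, 0 < C ∧ ∀ τ : ℝ, 0 ≤ τ → ∀ a b c : ℤ × ℤ → ℝ≥0∞,
      (∑' p : (ℤ × ℤ) × (ℤ × ℤ),
          ENNReal.ofReal (nz p.1) * a p.1 * b p.2
            * ENNReal.ofReal (nz (p.1 + p.2) ^ r * Real.exp (τ * nz (p.1 + p.2)))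
            * c (p.1 + p.2))
        ≤ ENNReal.ofReal C * S (r + 1 / 2) τ a * (b 0 + S r τ b)
            * (S r τ c + S (r + 1 / 2) τ c) := by
  intro r hr
  have hM := advectionConst_ne_top hr
  refine ⟨(advectionConst r).toReal, ENNReal.toReal_pos (by simp [advectionConst]) hM, ?_⟩
  intro τ hτ a b c
  have hsummand : ∀ j k : ℤ × ℤ, ENNReal.ofReal (nz j) * a j * b k
      * ENNReal.ofReal (nz (j + k) ^ r * Real.exp (τ * nz (j + k))) * c (j + k)
        = weighted 1 a j * b k * weighted r (expWeighted τ c) (j + k) := by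
    intro j k
    rw [ENNReal.ofReal_mul (Real.rpow_nonneg (nz_nonneg _) r),
      ← ENNReal.ofReal_rpow_of_nonneg (nz_nonneg _) (by linarith)]
    simp only [weighted, expWeighted, enz, ENNReal.rpow_one]
    ring
  rw [ENNReal.ofReal_toReal hM, ENNReal.tsum_prod']
  calc _ = ∑' j, ∑' k, weighted 1 a j * b k * weighted r (expWeighted τ c) (j + k) := by
        simp only [hsummand]
    _ ≤ _ := tsum_tsum_weighted_mul_le hr a b _
    _ ≤ _ := by
        rw [ell2_weighted_expWeighted (by linarith)]
        gcongr
        · exact ell2_weighted_le_S (by linarith) hτ a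
        · exact ell2_weighted_le_S (by linarith) hτ b
        · exact le_self_add

end
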